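/- arXiv:2402.08357 — 4 statements merged into one kernel-verified Lean document; each statement's English description precedes it below -/
import Mathlib

section
/- Let G be a finite group acting transitively on a finite set Ω, let H be the stabilizer of a point of Ω, let p be a prime dividing |H|, let C be a conjugacy class of G consisting of elements of order p of maximal p-fixity, and let g ∈ H ∩ C. If the action of G on Ω is binary, then every vertex lying in the connected component of the graph Γ(C) that contains g belongs to H. -/
/-- `I` and `J` are `r`-related under the action of `G`. -/
def Related (G : Type*) {Ω : Type*} [Group G] [MulAction G Ω] {n : ℕ} (r : ℕ)
    (I J : Fin n → Ω) : Prop :=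
  ∀ k : Fin r → Fin n, StrictMono k → ∃ g : G, ∀ i, g • I (k i) = J (k i)

/-- The action of `G` on `Ω` is binary. -/
def IsBinary (G Ω : Type*) [Group G] [MulAction G Ω] : Prop :=
  ∀ n : ℕ, 2 ≤ n → ∀ I J : Fin n → Ω, Related G 2 I J → Related G n I J

/-- The graph `Γ(D)` associated to a subset `D` of a group. -/
def classGraph {G : Type*} [Group G] (D : Set G) : SimpleGraph G where
  Adj g h := g ≠ h ∧ g ∈ D ∧ h ∈ D ∧ Commute g h ∧ (g * h⁻¹ ∈ D ∨ h * g⁻¹ ∈ D)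
  symm := by
    constructor
    rintro g h ⟨hne, hg, hh, hc, hd⟩
    exact ⟨hne.symm, hh, hg, hc.symm, hd.symm⟩
  loopless := by constructor; rintro g ⟨hne, -⟩; exact hne rfl

/-- `Δ(g, D)`: the subgroup generated by the vertices in the connected component
of `Γ(D)` containing `g`. -/
def Delta {G : Type*} [Group G] (g : G) (D : Set G) : Subgroup G :=
  Subgroup.closure {h | h ∈ D ∧ (classGraph D).Reachable g h}

/-- The component group `Δ(g)` of `g` : here `D` is the conjugacy class of `g`. -/
def DeltaC {G : Type*} [Group G] (g : G) : Subgroup G :=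
  Delta g {x | IsConj g x}

/-- `D` is a union of conjugacy classes. -/
def IsUnionConjClasses {G : Type*} [Group G] (D : Set G) : Prop :=
  ∀ x ∈ D, ∀ y : G, IsConj x y → y ∈ D

/-- The fixity of `g` acting on `Ω`: the number of fixed points of `g`. -/
noncomputable def fixity (G Ω : Type*) [Group G] [MulAction G Ω] (g : G) : ℕ :=
  Nat.card (MulAction.fixedBy Ω g)

/-- `g` is an element of order `p` of maximal `p`-fixity. -/
def MaxPFixity (G Ω : Type*) [Group G] [MulAction G Ω] (p : ℕ) (g : G) : Prop :=
  orderOf g = p ∧ ∀ h : G, orderOf h = p → fixity G Ω h ≤ fixity G Ω g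

/-- The ascending sequence of unions of conjugacy classes `D_1 = D`,
`D_{i+1}` = union of the conjugacy classes of elements of order `p`
meeting `Δ(g, D_i)`. -/
def DSeq {G : Type*} [Group G] (g : G) (D : Set G) (p : ℕ) : ℕ → Set G
  | 0 => D
  | i + 1 => {x : G | orderOf x = p ∧ ∃ y ∈ Delta g (DSeq g D p i), IsConj x y}

/-- `Δ_∞(g, D)`: the union of the chain `Δ(g, D_1) ≤ Δ(g, D_2) ≤ ⋯`. -/
def DeltaInf {G : Type*} [Group G] (g : G) (D : Set G) (p : ℕ) : Subgroup G :=
  ⨆ i : ℕ, Delta g (DSeq g D p i)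

/-- The terminal component group `Δ_∞(g)` of an element `g` of order `p`. -/
def DeltaInfC {G : Type*} [Group G] (g : G) (p : ℕ) : Subgroup G :=
  DeltaInf g {x | IsConj g x} p
/-!
It suffices to show that if `x – y` is an edge of `Γ(C)` and `x` fixes `ω`, then so
does `y`. Suppose not, and put `z = x y⁻¹`, `A, B, Z` the fixed-point sets of `x, y, z`, all of the
common maximal size `f`. Since `x` and `y` commute, `z` acts as `y⁻¹` on `A`, so `Z ∩ B = A ∩ B`,
and the map that is `y⁻¹` on `A \ B` and the identity elsewhere agrees, on any two points of
`A ∪ B ∪ Z`, with one of `y⁻¹`, `z`, `1`. Binarity yields `w ∈ G` agreeing with that map on all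
of `A ∪ B ∪ Z`. The `w`-orbit of `ω` is its `y⁻¹`-orbit, of length `p`, so a power of `w` has
order `p`; it fixes `B ∪ Z`, which has `2f - |A ∩ B| > f` points since `ω ∈ A \ B`.
-/

open MulAction

section Fixity

variable {G Ω : Type*} [Group G] [MulAction G Ω]

lemma fixity_eq_ncard (x : G) : fixity G Ω x = (fixedBy Ω x).ncard :=
  Nat.card_coe_set_eq _

lemma fixity_inv (x : G) : fixity G Ω x⁻¹ = fixity G Ω x := by
  rw [fixity, fixity, fixedBy_inv]

lemma MaxPFixity.inv {p : ℕ} {x : G} (hx : MaxPFixity G Ω p x) : MaxPFixity G Ω p x⁻¹ := by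
  rwa [MaxPFixity, orderOf_inv, fixity_inv]

lemma MaxPFixity.fixity_eq {p : ℕ} {x y : G} (hx : MaxPFixity G Ω p x)
    (hy : MaxPFixity G Ω p y) : fixity G Ω x = fixity G Ω y :=
  le_antisymm (hy.2 x hx.1) (hx.2 y hy.1)

end Fixity

lemma IsBinary.exists_forall_smul_eq {G Ω : Type*} [Group G] [MulAction G Ω]
    (hbin : IsBinary G Ω) {S : Set Ω} (hS : S.Finite) (δ : Ω → Ω)
    (hpair : ∀ u ∈ S, ∀ v ∈ S, ∃ g : G, g • u = δ u ∧ g • v = δ v) :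
    ∃ g : G, ∀ v ∈ S, g • v = δ v := by
  rcases S.subsingleton_or_nontrivial with hsub | hnt
  · rcases hsub.eq_empty_or_singleton with rfl | ⟨a, rfl⟩
    · exact ⟨1, by simp⟩
    · obtain ⟨g, hg, -⟩ := hpair a rfl a rfl
      exact ⟨g, by simpa using hg⟩
  · have : Finite S := hS
    let e := Finite.equivFin S
    have htwo : 2 ≤ Nat.card S := by
      rw [Nat.card_coe_set_eq]; exact (Set.one_lt_ncard_iff_nontrivial).mpr hnt
    have hrel : Related G 2 (fun i => (e.symm i : Ω)) (fun i => δ (e.symm i)) := by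
      intro k _
      obtain ⟨g, h0, h1⟩ := hpair _ (e.symm (k 0)).2 _ (e.symm (k 1)).2
      exact ⟨g, fun i => by fin_cases i <;> assumption⟩
    obtain ⟨g, hg⟩ := hbin _ htwo _ _ hrel id strictMono_id
    exact ⟨g, fun v hv => by simpa only [id, Equiv.symm_apply_apply] using hg (e ⟨v, hv⟩)⟩

section Period

variable {M α : Type*} [Monoid M] [MulAction M α]

lemma pow_smul_eq_pow_smul_of_eqOn {m n : M} {T : Set α} (hT : Set.MapsTo (n • ·) T T)
    (h : Set.EqOn (m • ·) (n • ·) T) (k : ℕ) {a : α} (ha : a ∈ T) : m ^ k • a = n ^ k • a := by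
  induction k generalizing a with
  | zero => simp
  | succ k ih =>
    rw [pow_succ, mul_smul, show m • a = n • a from h ha, ih (hT ha), ← mul_smul, ← pow_succ]

lemma period_dvd_period_of_forall_pow_smul_eq {m n : M} {a : α}
    (h : ∀ k : ℕ, m ^ k • a = n ^ k • a) : period n a ∣ period m a :=
  pow_smul_eq_iff_period_dvd.mp ((h _).symm.trans (pow_period_smul m a))

lemma period_eq_of_orderOf_eq_prime {p : ℕ} (hp : p.Prime) {m : M} (hm : orderOf m = p) {a : α}
    (ha : m • a ≠ a) : period m a = p :=
  ((Nat.dvd_prime hp).mp (hm ▸ period_dvd_orderOf m a)).resolve_left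
    (mt period_eq_one_iff.mp ha)

end Period

lemma exists_orderOf_eq_and_fixedBy_subset {G α : Type*} [Group G] [Finite G] [MulAction G α]
    {n : ℕ} {w : G} (hn : n ∣ orderOf w) : ∃ e : G, orderOf e = n ∧ fixedBy α w ⊆ fixedBy α e :=
  ⟨w ^ (orderOf w / n), orderOf_pow_orderOf_div (orderOf_pos w).ne' hn, by
    simpa only [zpow_natCast] using fixedBy_subset_fixedBy_zpow α w (orderOf w / n : ℕ)⟩

section Commuting

variable {G Ω : Type*} [Group G] [MulAction G Ω]

lemma fixedBy_mul_inv_inter_fixedBy (x y : G) :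
    fixedBy Ω (x * y⁻¹) ∩ fixedBy Ω y = fixedBy Ω x ∩ fixedBy Ω y := by
  ext v
  simp only [Set.mem_inter_iff, mem_fixedBy, mul_smul]
  constructor <;> rintro ⟨h, hy⟩ <;> refine ⟨?_, hy⟩ <;> rwa [inv_smul_eq_iff.mpr hy.symm] at *

variable {x y : G}

lemma Commute.mul_inv_smul_of_mem_fixedBy (hxy : Commute x y) {v : Ω} (hv : v ∈ fixedBy Ω x) :
    (x * y⁻¹) • v = y⁻¹ • v := by
  rw [hxy.inv_right.eq, mul_smul, hv]

lemma Commute.mapsTo_inv_smul_fixedBy_diff (hxy : Commute x y) :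
    Set.MapsTo (y⁻¹ • ·) (fixedBy Ω x \ fixedBy Ω y) (fixedBy Ω x \ fixedBy Ω y) := by
  rintro v ⟨hvx, hvy⟩
  refine ⟨?_, fun h => hvy ?_⟩
  · show x • y⁻¹ • v = y⁻¹ • v
    rw [← mul_smul, hxy.inv_right.eq, mul_smul, hvx]
  · have h : y • y⁻¹ • v = y⁻¹ • v := h
    rwa [smul_inv_smul, eq_inv_smul_iff] at h

lemma IsBinary.exists_eqOn_inv_smul (hbin : IsBinary G Ω) [Finite Ω] (hxy : Commute x y) :
    ∃ w : G, fixedBy Ω y ∪ fixedBy Ω (x * y⁻¹) ⊆ fixedBy Ω w ∧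
      Set.EqOn (w • ·) (y⁻¹ • ·) (fixedBy Ω x \ fixedBy Ω y) := by
  classical
  set A := fixedBy Ω x
  set B := fixedBy Ω y
  set Z := fixedBy Ω (x * y⁻¹)
  let δ : Ω → Ω := fun v => if v ∈ A \ B then y⁻¹ • v else v
  have hB : ∀ v ∈ B, y⁻¹ • v = v := fun v hv => inv_smul_eq_iff.mpr hv.symm
  have hZA : ∀ v ∈ Z, v ∉ A \ B := fun v hvZ ⟨hvA, hvB⟩ =>
    hvB (inv_smul_eq_iff.mp ((hxy.mul_inv_smul_of_mem_fixedBy hvA).symm.trans hvZ)).symm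
  have hAB : ∀ v ∈ A ∪ B, y⁻¹ • v = δ v := by
    rintro v hv
    by_cases h : v ∈ A \ B
    · exact (if_pos h).symm
    · rw [show δ v = v from if_neg h]
      exact hB v (by by_contra hvB; exact h ⟨hv.resolve_right hvB, hvB⟩)
  have hAZ : ∀ v ∈ A ∪ Z, (x * y⁻¹) • v = δ v := by
    rintro v (hv | hv)
    · rw [hxy.mul_inv_smul_of_mem_fixedBy hv]; exact hAB v (Or.inl hv)
    · rw [show δ v = v from if_neg (hZA v hv)]; exact hv
  have hBZ : ∀ v ∈ B ∪ Z, (1 : G) • v = δ v := by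
    rintro v hv
    have : v ∉ A \ B := by rcases hv with hv | hv; exacts [fun h => h.2 hv, hZA v hv]
    rw [one_smul, show δ v = v from if_neg this]
  obtain ⟨w, hw⟩ := hbin.exists_forall_smul_eq (Set.toFinite (A ∪ B ∪ Z)) δ (by
    rintro u hu v hv
    rcases hu with (hu | hu) | hu <;> rcases hv with (hv | hv) | hv <;>
    first
    | exact ⟨y⁻¹, hAB u (by tauto), hAB v (by tauto)⟩
    | exact ⟨x * y⁻¹, hAZ u (by tauto), hAZ v (by tauto)⟩
    | exact ⟨1, hBZ u (by tauto), hBZ v (by tauto)⟩)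
  refine ⟨w, fun v hv => ?_, fun v hv => ?_⟩
  · have hvS : v ∈ A ∪ B ∪ Z := by rcases hv with hv | hv <;> simp [hv]
    exact (hw v hvS).trans ((hBZ v hv).symm.trans (one_smul G v))
  · exact (hw v (Or.inl (Or.inl hv.1))).trans (hAB v (Or.inl hv.1)).symm

end Commuting

theorem IsBinary.smul_eq_of_maxPFixity {G Ω : Type*} [Group G] [Finite G] [MulAction G Ω]
    [Finite Ω] (hbin : IsBinary G Ω) {p : ℕ} (hp : p.Prime) {x y : G} (hxy : Commute x y)
    (hx : MaxPFixity G Ω p x) (hy : MaxPFixity G Ω p y) (hz : MaxPFixity G Ω p (x * y⁻¹))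
    {ω : Ω} (hω : x • ω = ω) : y • ω = ω := by
  by_contra hyω
  obtain ⟨w, hwfix, hw⟩ := hbin.exists_eqOn_inv_smul hxy
  have hp_dvd : p ∣ period w ω := by
    have h := period_dvd_period_of_forall_pow_smul_eq fun k =>
      pow_smul_eq_pow_smul_of_eqOn hxy.mapsTo_inv_smul_fixedBy_diff hw k ⟨hω, hyω⟩
    rwa [period_inv, period_eq_of_orderOf_eq_prime hp hy.1 hyω] at h
  obtain ⟨e, he, hwe⟩ :=
    exists_orderOf_eq_and_fixedBy_subset (α := Ω) (hp_dvd.trans (period_dvd_orderOf w ω))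
  have hBZ : (fixedBy Ω y ∪ fixedBy Ω (x * y⁻¹)).ncard ≤ fixity G Ω x :=
    calc _ ≤ (fixedBy Ω e).ncard := Set.ncard_le_ncard (hwfix.trans hwe)
      _ = fixity G Ω e := (fixity_eq_ncard e).symm
      _ ≤ fixity G Ω x := hx.2 e he
  have hAB : (fixedBy Ω x ∩ fixedBy Ω y).ncard < (fixedBy Ω x).ncard :=
    Set.ncard_lt_ncard (Set.inter_subset_left.ssubset_of_not_subset fun h => hyω (h hω).2)
  have hunion := Set.ncard_union_add_ncard_inter (fixedBy Ω y) (fixedBy Ω (x * y⁻¹))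
  rw [Set.inter_comm, fixedBy_mul_inv_inter_fixedBy] at hunion
  have hxy_fix := hx.fixity_eq hy
  have hxz_fix := hx.fixity_eq hz
  simp only [fixity_eq_ncard] at hBZ hxy_fix hxz_fix
  omega

theorem stmt0_general {G Ω : Type*} [Group G] [Fintype G] [Fintype Ω] [MulAction G Ω]
    (ω : Ω)
    (p : ℕ) (hp : p.Prime)
    (C : Set G) (g : G)
    (hCfix : ∀ x ∈ C, MaxPFixity G Ω p x)
    (hgH : g ∈ MulAction.stabilizer G ω)
    (hbin : IsBinary G Ω) :
    ∀ h ∈ C, (classGraph C).Reachable g h → h ∈ MulAction.stabilizer G ω := by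
  suffices ∀ h, Relation.ReflTransGen (classGraph C).Adj g h → h ∈ stabilizer G ω from
    fun h _ hreach => this h ((SimpleGraph.reachable_iff_reflTransGen g h).mp hreach)
  intro h hreach
  induction hreach with
  | refl => exact hgH
  | tail _ hadj ih =>
    obtain ⟨-, haC, hbC, hcomm, hdiff⟩ := hadj
    have hz : MaxPFixity G Ω p (_ * _⁻¹) := hdiff.elim (hCfix _) fun h => by
      simpa only [mul_inv_rev, inv_inv] using (hCfix _ h).inv
    exact hbin.smul_eq_of_maxPFixity hp hcomm (hCfix _ haC) (hCfix _ hbC) hz ih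

theorem stmt0 {G Ω : Type*} [Group G] [Fintype G] [Fintype Ω] [MulAction G Ω]
    [MulAction.IsPretransitive G Ω] (ω : Ω)
    (p : ℕ) (hp : p.Prime)
    (hdvd : p ∣ Nat.card (MulAction.stabilizer G ω))
    (C : Set G) (g : G)
    (hC : C = {x : G | IsConj g x})
    (hCfix : ∀ x ∈ C, MaxPFixity G Ω p x)
    (hgH : g ∈ MulAction.stabilizer G ω) (hgC : g ∈ C)
    (hbin : IsBinary G Ω) :
    ∀ h ∈ C, (classGraph C).Reachable g h → h ∈ MulAction.stabilizer G ω :=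
  stmt0_general ω p hp C g hCfix hgH hbin
end

section
/- Let p be a prime, let G be a finite group acting on a finite set Λ, and let g₁, g₂ be distinct commuting elements of G of order p. Set g₃ = g₁g₂⁻¹ and let F_i denote the fixed-point set of g_i on Λ for i = 1, 2, 3. Assume |F₁| = |F₂| = |F₃| ≥ 1 and F₁ ≠ F₂. If the action of G on Λ is binary, then there exists h ∈ G such that x·h = x·g₁ for all x ∈ F₃ and x·h = x for all x ∈ (F₁ ∪ F₂ ∪ F₃) ∖ F₃; in particular, the fixed-point set of h properly contains F₁. -/
/-! On `F₃` the elements `g₁` and `g₂` act alike, so every point of `F₁ ∪ F₂ ∪ F₃` is moved as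
required (by `g₁` on `F₃`, not at all elsewhere) by at least two of `1, g₁, g₂`. Hence any two
points are moved as required by a common element, and binarity produces a single `h`. It fixes
`F₁` and also any point of `F₂ \ F₁`, which exists because `|F₁| = |F₂|` and `F₁ ≠ F₂`. -/

open MulAction

theorem exists_and_of_two_of_three {α : Type*} {P Q : α → Prop} {a b c : α}
    (hP : P a ∧ P b ∨ P a ∧ P c ∨ P b ∧ P c) (hQ : Q a ∧ Q b ∨ Q a ∧ Q c ∨ Q b ∧ Q c) :
    ∃ g, P g ∧ Q g := by
  rcases hP with ⟨_, _⟩ | ⟨_, _⟩ | ⟨_, _⟩ <;> rcases hQ with ⟨_, _⟩ | ⟨_, _⟩ | ⟨_, _⟩ <;>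
    first
    | exact ⟨a, ‹_›, ‹_›⟩
    | exact ⟨b, ‹_›, ‹_›⟩
    | exact ⟨c, ‹_›, ‹_›⟩

section Binary

variable {G Ω : Type*} [Group G] [MulAction G Ω]

theorem IsBinary.exists_forall_smul_eq_s2 (hbin : IsBinary G Ω) {n : ℕ} (I J : Fin n → Ω)
    (hpair : ∀ i j, ∃ g : G, g • I i = J i ∧ g • I j = J j) :
    ∃ g : G, ∀ i, g • I i = J i := by
  rcases lt_or_ge n 2 with hn | hn
  · interval_cases n
    · exact ⟨1, fun i => i.elim0⟩
    · obtain ⟨g, hg, -⟩ := hpair 0 0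
      exact ⟨g, fun i => Subsingleton.elim 0 i ▸ hg⟩
  · have hrel : Related G 2 I J := fun k _ => by
      obtain ⟨g, h₀, h₁⟩ := hpair (k 0) (k 1)
      exact ⟨g, Fin.forall_fin_two.2 ⟨h₀, h₁⟩⟩
    exact hbin n hn I J hrel id strictMono_id

theorem IsBinary.exists_forall_mem_smul_eq (hbin : IsBinary G Ω) {S : Set Ω} (hS : S.Finite)
    (f : Ω → Ω) (hpair : ∀ x ∈ S, ∀ y ∈ S, ∃ g : G, g • x = f x ∧ g • y = f y) :
    ∃ g : G, ∀ x ∈ S, g • x = f x := by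
  have := hS.to_subtype
  let e := Finite.equivFin S
  obtain ⟨g, hg⟩ := hbin.exists_forall_smul_eq_s2 (fun i => (e.symm i : Ω)) (fun i => f (e.symm i))
    fun i j => hpair _ (e.symm i).2 _ (e.symm j).2
  refine ⟨g, fun x hx => ?_⟩
  simpa only [Equiv.symm_apply_apply] using hg (e ⟨x, hx⟩)

end Binary

section FixedPoints

variable {G Ω : Type*} [Group G] [MulAction G Ω] {g₁ g₂ : G} {x : Ω}

theorem smul_eq_smul_of_mem_fixedBy_mul_inv (hcomm : Commute g₁ g₂)
    (hx : x ∈ fixedBy Ω (g₁ * g₂⁻¹)) : g₂ • x = g₁ • x := by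
  rw [mem_fixedBy, hcomm.inv_right.eq, mul_smul, inv_smul_eq_iff] at hx
  exact hx.symm

theorem mem_fixedBy_of_mem_fixedBy_mul_inv (hcomm : Commute g₁ g₂) (h₂ : x ∈ fixedBy Ω g₂)
    (h₃ : x ∈ fixedBy Ω (g₁ * g₂⁻¹)) : x ∈ fixedBy Ω g₁ := by
  rw [mem_fixedBy, ← smul_eq_smul_of_mem_fixedBy_mul_inv hcomm h₃]
  exact h₂

open Classical in
theorem IsBinary.exists_smul_eq_ite_mem_fixedBy_mul_inv [Finite Ω] (hbin : IsBinary G Ω)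
    (hcomm : Commute g₁ g₂) :
    ∃ h : G, ∀ x ∈ fixedBy Ω g₁ ∪ fixedBy Ω g₂ ∪ fixedBy Ω (g₁ * g₂⁻¹),
      h • x = if x ∈ fixedBy Ω (g₁ * g₂⁻¹) then g₁ • x else x := by
  set f : Ω → Ω := fun x => if x ∈ fixedBy Ω (g₁ * g₂⁻¹) then g₁ • x else x
  have two_of_three : ∀ x ∈ fixedBy Ω g₁ ∪ fixedBy Ω g₂ ∪ fixedBy Ω (g₁ * g₂⁻¹),
      (1 : G) • x = f x ∧ g₁ • x = f x ∨ (1 : G) • x = f x ∧ g₂ • x = f x ∨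
        g₁ • x = f x ∧ g₂ • x = f x := by
    intro x hx
    by_cases h₃ : x ∈ fixedBy Ω (g₁ * g₂⁻¹)
    · have hf : f x = g₁ • x := if_pos h₃
      exact Or.inr (Or.inr ⟨hf.symm, (smul_eq_smul_of_mem_fixedBy_mul_inv hcomm h₃).trans hf.symm⟩)
    · have hf : f x = x := if_neg h₃
      simp only [hf, one_smul, true_and]
      rcases hx with (h₁ | h₂) | h₃'
      exacts [Or.inl h₁, Or.inr (Or.inl h₂), absurd h₃' h₃]
  exact hbin.exists_forall_mem_smul_eq (Set.toFinite _) f fun x hx y hy =>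
    exists_and_of_two_of_three (two_of_three x hx) (two_of_three y hy)

end FixedPoints

theorem stmt2_general {G Λ : Type*} [Group G] [Fintype Λ] [MulAction G Λ]
    (g₁ g₂ : G) (hcomm : Commute g₁ g₂)
    (g₃ : G) (hg₃ : g₃ = g₁ * g₂⁻¹)
    (F₁ F₂ F₃ : Set Λ)
    (hF₁ : F₁ = MulAction.fixedBy Λ g₁)
    (hF₂ : F₂ = MulAction.fixedBy Λ g₂)
    (hF₃ : F₃ = MulAction.fixedBy Λ g₃)
    (hcard₁ : Nat.card F₁ = Nat.card F₂)
    (hFne : F₁ ≠ F₂)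
    (hbin : IsBinary G Λ) :
    ∃ h : G, (∀ x ∈ F₃, h • x = g₁ • x) ∧
      (∀ x ∈ (F₁ ∪ F₂ ∪ F₃) \ F₃, h • x = x) ∧
      MulAction.fixedBy Λ g₁ ⊂ MulAction.fixedBy Λ h := by
  subst hg₃ hF₁ hF₂ hF₃
  obtain ⟨h, hh⟩ := hbin.exists_smul_eq_ite_mem_fixedBy_mul_inv hcomm
  have hnot_subset : ¬ fixedBy Λ g₂ ⊆ fixedBy Λ g₁ := fun hsub =>
    hFne (Set.eq_of_subset_of_ncard_le hsub
      (by simp only [← Nat.card_coe_set_eq, hcard₁, le_refl]) (Set.toFinite _)).symm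
  obtain ⟨a, ha₂, ha₁⟩ := Set.not_subset.1 hnot_subset
  have ha₃ : a ∉ fixedBy Λ (g₁ * g₂⁻¹) := fun ha₃ =>
    ha₁ (mem_fixedBy_of_mem_fixedBy_mul_inv hcomm ha₂ ha₃)
  refine ⟨h, fun x hx => ?_, fun x hx => ?_, fun x hx => ?_, fun hsub => ha₁ (hsub ?_)⟩
  · rw [hh x (Or.inr hx), if_pos hx]
  · rw [hh x hx.1, if_neg hx.2]
  · rw [mem_fixedBy, hh x (Or.inl (Or.inl hx))]
    split_ifs
    exacts [hx, rfl]
  · rw [mem_fixedBy, hh a (Or.inl (Or.inr ha₂)), if_neg ha₃]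

theorem stmt2 {G Λ : Type*} [Group G] [Fintype G] [Fintype Λ] [MulAction G Λ]
    (p : ℕ) (hp : p.Prime)
    (g₁ g₂ : G) (hne : g₁ ≠ g₂) (hcomm : Commute g₁ g₂)
    (ho₁ : orderOf g₁ = p) (ho₂ : orderOf g₂ = p)
    (g₃ : G) (hg₃ : g₃ = g₁ * g₂⁻¹)
    (F₁ F₂ F₃ : Set Λ)
    (hF₁ : F₁ = MulAction.fixedBy Λ g₁)
    (hF₂ : F₂ = MulAction.fixedBy Λ g₂)
    (hF₃ : F₃ = MulAction.fixedBy Λ g₃)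
    (hcard₁ : Nat.card F₁ = Nat.card F₂) (hcard₂ : Nat.card F₂ = Nat.card F₃)
    (hpos : 1 ≤ Nat.card F₃)
    (hFne : F₁ ≠ F₂)
    (hbin : IsBinary G Λ) :
    ∃ h : G, (∀ x ∈ F₃, h • x = g₁ • x) ∧
      (∀ x ∈ (F₁ ∪ F₂ ∪ F₃) \ F₃, h • x = x) ∧
      MulAction.fixedBy Λ g₁ ⊂ MulAction.fixedBy Λ h :=
  stmt2_general g₁ g₂ hcomm g₃ hg₃ F₁ F₂ F₃ hF₁ hF₂ hF₃ hcard₁ hFne hbin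
end

section
/- Let q = 2^a with a ≥ 2, and let G = Sp₄(q) be the symplectic group over F_q. Let t ∈ G be an involution with rank(t − 1) = 2 such that φ(x, tx) = 0 for all vectors x (i.e. t is a short root involution). Then the component group Δ(t) equals the short root subgroup {1 + c(t − 1) : c ∈ F_q}. -/
open Matrix in
/-- `Sp F n`: the symplectic group `Sp_{2n}(F)`. -/
abbrev Sp (n : ℕ) (F : Type*) [Field F] := Matrix.symplecticGroup (Fin n) F

/-!
Write `N = t - 1`. In characteristic 2, `t` is a short root involution exactly when `N ≠ 0`,
`N² = 0` and `x ↦ φ(x, N x)` vanishes. Then `L = range N = ker N` is a Lagrangian plane, and the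
alternating forms vanishing on `L` form a line, spanned by `φ(·, N ·)`.

Choosing `x, y` with `φ(x, y) = 0` and `φ(y, N x) = 1`, the basis `x, y, N y, N x` is symplectic
and puts `N` in a fixed normal form. So all such `N` are conjugate: the class `D` of `t` is
`{u | u - 1 is such an N}`, and it contains `1 + c N` for every `c ≠ 0`.

If `a, b ∈ D` are adjacent in `Γ(D)`, then `a - 1` and `b - 1` commute, and the form
`φ(·, (a - 1)(b - 1) ·)` is alternating and vanishes on `range (a - 1)`, so
`(a - 1)(b - 1) = λ (a - 1)`; as `(b - 1)² = 0`, `λ = 0`. Then `φ(·, (b - 1) ·)` vanishes on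
`range (a - 1)` too, so `b - 1 ∈ F (a - 1)`. Hence the component of `t` stays in the root group
`{1 + c N}`, and conversely `1 + c N` is adjacent to `t` for `c ≠ 0, 1`.
-/

open Matrix

namespace Matrix

variable {R ι : Type*} [CommRing R] [Fintype ι]

def IsAlternating (A : Matrix ι ι R) : Prop := ∀ x : ι → R, x ⬝ᵥ A *ᵥ x = 0

namespace IsAlternating

variable {A B : Matrix ι ι R}

theorem sub (hA : IsAlternating A) (hB : IsAlternating B) : IsAlternating (A - B) := fun x => by
  rw [sub_mulVec, dotProduct_sub, hA, hB, sub_zero]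

theorem smul (hA : IsAlternating A) (c : R) : IsAlternating (c • A) := fun x => by
  rw [smul_mulVec, dotProduct_smul, hA, smul_zero]

theorem transpose_mul_mul (hA : IsAlternating A) (U : Matrix ι ι R) :
    IsAlternating (Uᵀ * A * U) := fun x => by
  rw [Matrix.mul_assoc, ← mulVec_mulVec, dotProduct_mulVec, vecMul_transpose, ← mulVec_mulVec,
    hA]

theorem dotProduct_mulVec_comm [CharP R 2] (hA : IsAlternating A) (x y : ι → R) :
    x ⬝ᵥ A *ᵥ y = y ⬝ᵥ A *ᵥ x := by
  have h := hA (x + y)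
  simp only [mulVec_add, dotProduct_add, add_dotProduct, hA x, hA y, zero_add, add_zero] at h
  exact (CharTwo.add_eq_zero.1 h).symm

end IsAlternating

theorem isAlternating_J (n : Type*) [Fintype n] [DecidableEq n] : IsAlternating (J n R) := by
  intro x
  obtain ⟨u, v, rfl⟩ : ∃ u v, x = Sum.elim u v := ⟨_, _, (Sum.elim_comp_inl_inr x).symm⟩
  simp [J, fromBlocks_mulVec, dotProduct_comm u, neg_mulVec]

theorem J_mul_J [CharP R 2] (n : Type*) [Fintype n] [DecidableEq n] : J n R * J n R = 1 := by
  rw [J_squared, ← neg_one_smul R, CharTwo.neg_eq, one_smul]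

end Matrix

namespace SymplecticGroup

variable {F n : Type*} [Field F] [Fintype n] [DecidableEq n] (g : symplecticGroup n F)

theorem coe_inv_mul_coe : g⁻¹.1 * g.1 = 1 :=
  congrArg Subtype.val (inv_mul_cancel g)

theorem coe_mul_coe_inv : g.1 * g⁻¹.1 = 1 :=
  congrArg Subtype.val (mul_inv_cancel g)

theorem J_mul_coe : J n F * g.1 = g⁻¹.1ᵀ * J n F := by
  conv_lhs => rw [← mem_iff'.1 (g⁻¹).2, Matrix.mul_assoc, coe_inv_mul_coe, Matrix.mul_one]

theorem eq_zero_of_transpose_mul_mul_eq_zero {A Q : Matrix (n ⊕ n) (n ⊕ n) F}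
    (hQ : Q ∈ symplecticGroup n F) (h : Qᵀ * A * Q = 0) : A = 0 := by
  have hQu : IsUnit Q := (isUnit_iff_isUnit_det Q).2 (symplectic_det hQ)
  exact (isUnit_transpose Q).2 hQu |>.mul_right_eq_zero.1 (hQu.mul_left_eq_zero.1 h)

end SymplecticGroup

theorem CharTwo.sub_one_mul_self_eq_zero_iff {R : Type*} [Ring R] [CharP R 2] (a : R) :
    (a - 1) * (a - 1) = 0 ↔ a * a = 1 := by
  rw [CharTwo.sub_eq_add, add_mul, mul_add, mul_add, mul_one, one_mul, mul_one, add_assoc (a * a),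
    ← add_assoc a, CharTwo.add_self_eq_zero, zero_add, ← CharTwo.sub_eq_add, sub_eq_zero]

section ShortRoot

variable {F n : Type*} [Field F] [Fintype n] [DecidableEq n]

/-- Models `N = t - 1` for a short root involution `t` in characteristic 2: `t² = 1` becomes
`N² = 0`, and `φ(x, t x) = 0` becomes `φ(x, N x) = 0` since `φ` is alternating. In `Sp₄`,
`N ≠ 0` already forces `rank N = 2`. -/
structure IsShortRootNilpotent (N : Matrix (n ⊕ n) (n ⊕ n) F) : Prop where
  mul_self_eq_zero : N * N = 0
  isAlternating : IsAlternating (J n F * N)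
  ne_zero : N ≠ 0

namespace IsShortRootNilpotent

variable {N : Matrix (n ⊕ n) (n ⊕ n) F}

theorem conj (hN : IsShortRootNilpotent N) (g : symplecticGroup n F) :
    IsShortRootNilpotent (g.1 * N * g⁻¹.1) where
  mul_self_eq_zero := calc
    g.1 * N * g⁻¹.1 * (g.1 * N * g⁻¹.1) = g.1 * N * (g⁻¹.1 * g.1) * N * g⁻¹.1 := by
      simp only [Matrix.mul_assoc]
    _ = 0 := by
      rw [SymplecticGroup.coe_inv_mul_coe, Matrix.mul_one, Matrix.mul_assoc g.1,
        hN.mul_self_eq_zero, Matrix.mul_zero, Matrix.zero_mul]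
  isAlternating := by
    rw [← Matrix.mul_assoc, ← Matrix.mul_assoc, SymplecticGroup.J_mul_coe,
      Matrix.mul_assoc _ (J n F)]
    exact hN.isAlternating.transpose_mul_mul _
  ne_zero h := hN.ne_zero <| calc
    N = g⁻¹.1 * (g.1 * N * g⁻¹.1) * g.1 := by
      simp only [← Matrix.mul_assoc, SymplecticGroup.coe_inv_mul_coe, Matrix.one_mul]
      rw [Matrix.mul_assoc, SymplecticGroup.coe_inv_mul_coe, Matrix.mul_one]
    _ = 0 := by rw [h, Matrix.mul_zero, Matrix.zero_mul]

theorem of_isConj {t u : symplecticGroup n F} (ht : IsShortRootNilpotent (t.1 - 1))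
    (h : IsConj t u) : IsShortRootNilpotent (u.1 - 1) := by
  obtain ⟨g, rfl⟩ := isConj_iff.1 h
  convert ht.conj g using 1
  rw [Matrix.mul_sub, Matrix.sub_mul, Matrix.mul_one, SymplecticGroup.coe_mul_coe_inv]
  rfl

theorem smul (hN : IsShortRootNilpotent N) {c : F} (hc : c ≠ 0) :
    IsShortRootNilpotent (c • N) where
  mul_self_eq_zero := by rw [smul_mul_smul_comm, hN.mul_self_eq_zero, smul_zero]
  isAlternating := by rw [Matrix.mul_smul]; exact hN.isAlternating.smul c
  ne_zero := smul_ne_zero hc hN.ne_zero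

variable [CharP F 2]

theorem mul_self_eq_one [Nonempty n] {u : symplecticGroup n F}
    (hu : IsShortRootNilpotent (u.1 - 1)) : u * u = 1 :=
  Subtype.ext <| (CharTwo.sub_one_mul_self_eq_zero_iff u.1).1 hu.mul_self_eq_zero

theorem mulVec_dotProduct_J_mul_mulVec (hN : IsShortRootNilpotent N) (u w : n ⊕ n → F) :
    (N *ᵥ u) ⬝ᵥ (J n F * N) *ᵥ w = 0 := by
  rw [hN.isAlternating.dotProduct_mulVec_comm, mulVec_mulVec, Matrix.mul_assoc,
    hN.mul_self_eq_zero, Matrix.mul_zero, zero_mulVec, dotProduct_zero]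

theorem exists_normalized_pair (hN : IsShortRootNilpotent N) :
    ∃ x y : n ⊕ n → F, x ⬝ᵥ J n F *ᵥ y = 0 ∧ y ⬝ᵥ (J n F * N) *ᵥ x = 1 := by
  obtain ⟨x, hx⟩ : ∃ x, (J n F * N) *ᵥ x ≠ 0 := by
    by_contra! h
    refine hN.ne_zero (ext_iff_mulVec.2 fun v => ?_)
    rw [← Matrix.one_mul N, ← J_mul_J n, Matrix.mul_assoc, ← mulVec_mulVec, h, mulVec_zero,
      zero_mulVec]
  obtain ⟨y₀, hy₀⟩ : ∃ y₀, y₀ ⬝ᵥ (J n F * N) *ᵥ x ≠ 0 := by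
    by_contra! h
    exact hx (dotProduct_eq_zero _ fun w => by rw [dotProduct_comm, h])
  obtain ⟨y, hy⟩ : ∃ y, y ⬝ᵥ (J n F * N) *ᵥ x = 1 :=
    ⟨(y₀ ⬝ᵥ (J n F * N) *ᵥ x)⁻¹ • y₀, by
      rw [smul_dotProduct, smul_eq_mul, inv_mul_cancel₀ hy₀]⟩
  have hxNy : x ⬝ᵥ J n F *ᵥ N *ᵥ y = 1 := by
    rw [mulVec_mulVec, hN.isAlternating.dotProduct_mulVec_comm, hy]
  -- as `x ⬝ᵥ J (N y) = 1`, adding `(x ⬝ᵥ J y) • N y` to `y` makes it orthogonal to `x`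
  refine ⟨x, y + (x ⬝ᵥ J n F *ᵥ y) • N *ᵥ y, ?_, ?_⟩
  · rw [mulVec_add, mulVec_smul, dotProduct_add, dotProduct_smul, hxNy, smul_eq_mul, mul_one,
      CharTwo.add_self_eq_zero]
  · rw [add_dotProduct, smul_dotProduct, hy, hN.mulVec_dotProduct_J_mul_mulVec, smul_zero,
      add_zero]

end IsShortRootNilpotent

theorem one_add_smul_mul_one_add_smul {N : Matrix (n ⊕ n) (n ⊕ n) F} (hN : N * N = 0)
    (c d : F) : (1 + c • N) * (1 + d • N) = 1 + (c + d) • N := by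
  simp only [Matrix.add_mul, Matrix.mul_add, Matrix.one_mul, Matrix.mul_one, Matrix.smul_mul,
    Matrix.mul_smul, hN, smul_zero, add_zero, add_smul]
  abel

def rootSubgroup (N : Matrix (n ⊕ n) (n ⊕ n) F) (hN : N * N = 0) :
    Subgroup (symplecticGroup n F) where
  carrier := {u | ∃ c : F, u.1 = 1 + c • N}
  one_mem' := ⟨0, by rw [zero_smul, add_zero]; rfl⟩
  mul_mem' := by
    rintro u v ⟨c, hc⟩ ⟨d, hd⟩
    exact ⟨c + d, by rw [Submonoid.coe_mul, hc, hd, one_add_smul_mul_one_add_smul hN]⟩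
  inv_mem' := by
    rintro u ⟨c, hc⟩
    refine ⟨-c, ?_⟩
    calc u⁻¹.1 = u⁻¹.1 * (u.1 * (1 + (-c) • N)) := by
          rw [hc, one_add_smul_mul_one_add_smul hN, add_neg_cancel, zero_smul, add_zero,
            Matrix.mul_one]
      _ = 1 + (-c) • N := by
          rw [← Matrix.mul_assoc, SymplecticGroup.coe_inv_mul_coe, Matrix.one_mul]

end ShortRoot

section Sp4

variable {F : Type*} [Field F]

def stdShortRootNilpotent (F : Type*) [Field F] : Matrix (Fin 2 ⊕ Fin 2) (Fin 2 ⊕ Fin 2) F :=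
  fromBlocks 0 0 !![0, 1; 1, 0] 0

/-- Columns `x, y, N y, N x`: for a pair from `exists_normalized_pair` this order makes the Gram
matrix with respect to `J` equal to `J` (in characteristic 2). -/
def symplecticFrame (N : Matrix (Fin 2 ⊕ Fin 2) (Fin 2 ⊕ Fin 2) F)
    (x y : Fin 2 ⊕ Fin 2 → F) : Matrix (Fin 2 ⊕ Fin 2) (Fin 2 ⊕ Fin 2) F :=
  (of (Sum.elim ![x, y] ![N *ᵥ y, N *ᵥ x]))ᵀ

variable {N : Matrix (Fin 2 ⊕ Fin 2) (Fin 2 ⊕ Fin 2) F} {x y : Fin 2 ⊕ Fin 2 → F}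

theorem symplecticFrame_transpose_mul_mul_apply (A : Matrix (Fin 2 ⊕ Fin 2) (Fin 2 ⊕ Fin 2) F)
    (a b : Fin 2 ⊕ Fin 2) :
    ((symplecticFrame N x y)ᵀ * A * symplecticFrame N x y) a b =
      Sum.elim ![x, y] ![N *ᵥ y, N *ᵥ x] a ⬝ᵥ
        A *ᵥ Sum.elim ![x, y] ![N *ᵥ y, N *ᵥ x] b := by
  rw [mul_mul_apply, symplecticFrame, transpose_transpose]
  rfl

theorem mul_symplecticFrame (hN : N * N = 0) :
    N * symplecticFrame N x y = symplecticFrame N x y * stdShortRootNilpotent F := by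
  ext a b
  change (N *ᵥ Sum.elim ![x, y] ![N *ᵥ y, N *ᵥ x] b) a = _
  rcases b with b | b <;> fin_cases b <;>
    simp [symplecticFrame, stdShortRootNilpotent, mul_apply, Fintype.sum_sum_type, mulVec_mulVec,
      hN]

variable [CharP F 2]

namespace IsShortRootNilpotent

theorem symplecticFrame_mem (hN : IsShortRootNilpotent N) (hxy : x ⬝ᵥ J (Fin 2) F *ᵥ y = 0)
    (hyx : y ⬝ᵥ (J (Fin 2) F * N) *ᵥ x = 1) :
    symplecticFrame N x y ∈ symplecticGroup (Fin 2) F := by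
  have hJ := (isAlternating_J (R := F) (Fin 2)).dotProduct_mulVec_comm
  have hJN := hN.isAlternating.dotProduct_mulVec_comm
  rw [SymplecticGroup.mem_iff']
  ext a b
  rw [symplecticFrame_transpose_mul_mul_apply]
  rcases a with a | a <;> rcases b with b | b <;> fin_cases a <;> fin_cases b <;>
    simp [hxy, hyx, isAlternating_J (Fin 2) x, isAlternating_J (Fin 2) y, hJ y x, hJ (N *ᵥ _) _,
      hN.isAlternating x, hN.isAlternating y, hJN x y, hN.mulVec_dotProduct_J_mul_mulVec] <;>
    simp [J, CharTwo.neg_eq]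

theorem exists_mul_eq_mul_std (hN : IsShortRootNilpotent N) :
    ∃ g : symplecticGroup (Fin 2) F, N * g.1 = g.1 * stdShortRootNilpotent F := by
  obtain ⟨x, y, hxy, hyx⟩ := hN.exists_normalized_pair
  exact ⟨⟨_, hN.symplecticFrame_mem hxy hyx⟩, mul_symplecticFrame hN.mul_self_eq_zero⟩

/-- The alternating forms vanishing on the Lagrangian plane `range N = ker N` form a line. -/
theorem exists_eq_smul_J_mul_of_mul_eq_zero (hN : IsShortRootNilpotent N)
    {A : Matrix (Fin 2 ⊕ Fin 2) (Fin 2 ⊕ Fin 2) F} (hA : IsAlternating A) (hAN : A * N = 0) :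
    ∃ d : F, A = d • (J (Fin 2) F * N) := by
  obtain ⟨x, y, hxy, hyx⟩ := hN.exists_normalized_pair
  refine ⟨y ⬝ᵥ A *ᵥ x, sub_eq_zero.1 ?_⟩
  set B := A - (y ⬝ᵥ A *ᵥ x) • (J (Fin 2) F * N)
  have hB : IsAlternating B := hA.sub (hN.isAlternating.smul _)
  have hBN (w : Fin 2 ⊕ Fin 2 → F) : B *ᵥ N *ᵥ w = 0 := by
    rw [mulVec_mulVec, Matrix.sub_mul, hAN, Matrix.smul_mul, Matrix.mul_assoc,
      hN.mul_self_eq_zero, Matrix.mul_zero, smul_zero, sub_zero, zero_mulVec]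
  have hByx : y ⬝ᵥ B *ᵥ x = 0 := by
    rw [sub_mulVec, dotProduct_sub, smul_mulVec, dotProduct_smul, hyx, smul_eq_mul, mul_one,
      sub_self]
  apply SymplecticGroup.eq_zero_of_transpose_mul_mul_eq_zero (hN.symplecticFrame_mem hxy hyx)
  ext a b
  rw [symplecticFrame_transpose_mul_mul_apply]
  rcases a with a | a <;> rcases b with b | b <;> fin_cases a <;> fin_cases b <;>
    simp [hB x, hB y, hByx, hB.dotProduct_mulVec_comm x y, hB.dotProduct_mulVec_comm (N *ᵥ _),
      hBN]

theorem exists_eq_smul_of_commute {P : Matrix (Fin 2 ⊕ Fin 2) (Fin 2 ⊕ Fin 2) F}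
    (hN : IsShortRootNilpotent N) (hP : IsShortRootNilpotent P) (hcomm : N * P = P * N)
    (hNP : IsAlternating (J (Fin 2) F * (N * P))) : ∃ d : F, P = d • N := by
  have cancel_J {X : Matrix (Fin 2 ⊕ Fin 2) (Fin 2 ⊕ Fin 2) F} {d : F}
      (h : J (Fin 2) F * X = d • (J (Fin 2) F * N)) : X = d • N := by
    rw [← Matrix.one_mul X, ← J_mul_J (Fin 2), Matrix.mul_assoc, h, Matrix.mul_smul,
      ← Matrix.mul_assoc, J_mul_J (Fin 2), Matrix.one_mul]
  obtain ⟨c, hc⟩ := hN.exists_eq_smul_J_mul_of_mul_eq_zero hNP <| by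
    rw [Matrix.mul_assoc, Matrix.mul_assoc, ← hcomm, ← Matrix.mul_assoc N, hN.mul_self_eq_zero,
      Matrix.zero_mul, Matrix.mul_zero]
  replace hc : N * P = c • N := cancel_J hc
  have hc0 : c = 0 := by
    have : (c * c) • N = 0 := calc
      (c * c) • N = N * P * P := by rw [hc, Matrix.smul_mul, hc, smul_smul]
      _ = 0 := by rw [Matrix.mul_assoc, hP.mul_self_eq_zero, Matrix.mul_zero]
    exact _root_.mul_self_eq_zero.1 ((smul_eq_zero.1 this).resolve_right hN.ne_zero)
  obtain ⟨d, hd⟩ := hN.exists_eq_smul_J_mul_of_mul_eq_zero hP.isAlternating <| by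
    rw [Matrix.mul_assoc, ← hcomm, hc, hc0, zero_smul, Matrix.mul_zero]
  exact ⟨d, cancel_J hd⟩

end IsShortRootNilpotent

end Sp4

section ComponentGroup

variable {F : Type*} [Field F] [CharP F 2] {t : Sp 2 F}

theorem isConj_of_isShortRootNilpotent {u v : Sp 2 F} (hu : IsShortRootNilpotent (u.1 - 1))
    (hv : IsShortRootNilpotent (v.1 - 1)) : IsConj u v := by
  have conj_std {w g : Sp 2 F} (hg : (w.1 - 1) * g.1 = g.1 * stdShortRootNilpotent F) :
      (g⁻¹ * w * g).1 = 1 + stdShortRootNilpotent F := by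
    rw [sub_mul, Matrix.one_mul, sub_eq_iff_eq_add'] at hg
    change g⁻¹.1 * w.1 * g.1 = _
    rw [Matrix.mul_assoc, hg, Matrix.mul_add, ← Matrix.mul_assoc,
      SymplecticGroup.coe_inv_mul_coe, Matrix.one_mul]
  have isConj_conj (w k : Sp 2 F) : IsConj w (k⁻¹ * w * k) :=
    isConj_iff.2 ⟨k⁻¹, by rw [inv_inv]⟩
  obtain ⟨g, hg⟩ := hu.exists_mul_eq_mul_std
  obtain ⟨h, hh⟩ := hv.exists_mul_eq_mul_std
  have e : g⁻¹ * u * g = h⁻¹ * v * h := Subtype.ext (by rw [conj_std hg, conj_std hh])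
  exact (isConj_conj u g).trans (e ▸ (isConj_conj v h).symm)

theorem isConj_iff_isShortRootNilpotent (ht : IsShortRootNilpotent (t.1 - 1)) {u : Sp 2 F} :
    IsConj t u ↔ IsShortRootNilpotent (u.1 - 1) :=
  ⟨ht.of_isConj, isConj_of_isShortRootNilpotent ht⟩

theorem isConj_of_coe_eq_one_add_smul (ht : IsShortRootNilpotent (t.1 - 1)) {u : Sp 2 F}
    {c : F} (hc : u.1 = 1 + c • (t.1 - 1)) (hc0 : c ≠ 0) : IsConj t u :=
  (isConj_iff_isShortRootNilpotent ht).2 (by rw [hc, add_sub_cancel_left]; exact ht.smul hc0)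

theorem exists_sub_one_eq_smul_of_adj (ht : IsShortRootNilpotent (t.1 - 1)) {a b : Sp 2 F}
    (hab : (classGraph {x | IsConj t x}).Adj a b) : ∃ d : F, b.1 - 1 = d • (a.1 - 1) := by
  obtain ⟨-, ha, hb, hcomm, hprod⟩ := hab
  simp only [Set.mem_ofPred_eq, isConj_iff_isShortRootNilpotent ht] at ha hb hprod
  -- all vertices are involutions, so either condition on the product says `a * b ∈ D`
  have hab : IsShortRootNilpotent ((a * b).1 - 1) := by
    rcases hprod with h | h
    · rwa [inv_eq_of_mul_eq_one_right hb.mul_self_eq_one] at h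
    · rwa [inv_eq_of_mul_eq_one_right ha.mul_self_eq_one, ← hcomm.eq] at h
  have hcomm' : (a.1 - 1) * (b.1 - 1) = (b.1 - 1) * (a.1 - 1) := by
    have := congrArg Subtype.val hcomm.eq
    simp only [Submonoid.coe_mul] at this
    simp only [Matrix.mul_sub, Matrix.sub_mul, Matrix.mul_one, Matrix.one_mul, this]
    abel
  have hprod' : (a.1 - 1) * (b.1 - 1) = ((a * b).1 - 1) - (a.1 - 1) - (b.1 - 1) := by
    simp only [Submonoid.coe_mul, Matrix.mul_sub, Matrix.sub_mul, Matrix.mul_one, Matrix.one_mul]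
    abel
  refine ha.exists_eq_smul_of_commute hb hcomm' ?_
  rw [hprod', Matrix.mul_sub, Matrix.mul_sub]
  exact (hab.isAlternating.sub ha.isAlternating).sub hb.isAlternating

theorem exists_sub_one_eq_smul_of_reachable (ht : IsShortRootNilpotent (t.1 - 1)) {u : Sp 2 F}
    (hu : (classGraph {x | IsConj t x}).Reachable t u) : ∃ c : F, u.1 - 1 = c • (t.1 - 1) := by
  replace hu := (SimpleGraph.reachable_iff_reflTransGen t u).1 hu
  induction hu with
  | refl => exact ⟨1, (one_smul F _).symm⟩
  | tail _ hvw ih =>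
    obtain ⟨c, hc⟩ := ih
    obtain ⟨d, hd⟩ := exists_sub_one_eq_smul_of_adj ht hvw
    exact ⟨d * c, by rw [hd, hc, smul_smul]⟩

theorem classGraph_adj_of_coe_eq_one_add_smul (ht : IsShortRootNilpotent (t.1 - 1))
    {u : Sp 2 F} {c : F} (hc : u.1 = 1 + c • (t.1 - 1)) (hc0 : c ≠ 0) (hut : u ≠ t) :
    (classGraph {x | IsConj t x}).Adj t u := by
  have htc : t.1 = 1 + (1 : F) • (t.1 - 1) := by rw [one_smul, add_sub_cancel]
  have hmul (c d : F) : (1 + c • (t.1 - 1)) * (1 + d • (t.1 - 1)) = 1 + (c + d) • (t.1 - 1) :=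
    one_add_smul_mul_one_add_smul ht.mul_self_eq_zero c d
  have htu : (t * u).1 = 1 + (1 + c) • (t.1 - 1) := by
    rw [Submonoid.coe_mul, hc, ← hmul, ← htc]
  have hut' : (u * t).1 = 1 + (c + 1) • (t.1 - 1) := by
    rw [Submonoid.coe_mul, hc, ← hmul, ← htc]
  have h1c : 1 + c ≠ 0 := fun h => hut <| Subtype.ext <| by
    rw [hc, ← CharTwo.add_eq_zero.1 h, one_smul, add_sub_cancel]
  have hu := isConj_of_coe_eq_one_add_smul ht hc hc0
  refine ⟨hut.symm, IsConj.refl t, hu, Subtype.ext (by rw [htu, hut', add_comm (1 : F)]),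
    Or.inl ?_⟩
  rw [inv_eq_of_mul_eq_one_right ((isConj_iff_isShortRootNilpotent ht).1 hu).mul_self_eq_one]
  exact isConj_of_coe_eq_one_add_smul ht htu h1c

theorem DeltaC_le_rootSubgroup (ht : IsShortRootNilpotent (t.1 - 1)) :
    DeltaC t ≤ rootSubgroup (t.1 - 1) ht.mul_self_eq_zero :=
  (Subgroup.closure_le _).2 fun _ ⟨_, hu⟩ =>
    (exists_sub_one_eq_smul_of_reachable ht hu).imp fun _ hc => sub_eq_iff_eq_add'.1 hc

theorem rootSubgroup_le_DeltaC (ht : IsShortRootNilpotent (t.1 - 1)) :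
    rootSubgroup (t.1 - 1) ht.mul_self_eq_zero ≤ DeltaC t := by
  rintro u ⟨c, hc⟩
  rcases eq_or_ne c 0 with rfl | hc0
  · rw [zero_smul, add_zero] at hc
    rw [show u = 1 from Subtype.ext hc]
    exact one_mem _
  refine Subgroup.subset_closure ⟨isConj_of_coe_eq_one_add_smul ht hc hc0, ?_⟩
  rcases eq_or_ne u t with rfl | hut
  · rfl
  · exact (classGraph_adj_of_coe_eq_one_add_smul ht hc hc0 hut).reachable

end ComponentGroup

theorem stmt7_general (F : Type*) [Field F] [Fintype F] (a : ℕ)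
    (hF : Fintype.card F = 2 ^ a)
    (t : Sp 2 F) (hinv : t * t = 1)
    (ht : ((t : Matrix (Fin 2 ⊕ Fin 2) (Fin 2 ⊕ Fin 2) F) - 1).rank = 2)
    (hshort : ∀ x : (Fin 2 ⊕ Fin 2) → F,
      dotProduct x
        (Matrix.mulVec (Matrix.J (Fin 2) F) (Matrix.mulVec (t : Matrix (Fin 2 ⊕ Fin 2) (Fin 2 ⊕ Fin 2) F) x)) = 0) :
    (DeltaC t : Set (Sp 2 F))
      = {u : Sp 2 F | ∃ c : F,
          (u : Matrix (Fin 2 ⊕ Fin 2) (Fin 2 ⊕ Fin 2) F)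
            = 1 + c • ((t : Matrix (Fin 2 ⊕ Fin 2) (Fin 2 ⊕ Fin 2) F) - 1)} := by
  have : CharP F 2 := charP_of_card_eq_prime_pow hF
  have hJt : IsAlternating (J (Fin 2) F * t.1) := fun x => by rw [← mulVec_mulVec, hshort]
  have hN : IsShortRootNilpotent ((t : Matrix (Fin 2 ⊕ Fin 2) (Fin 2 ⊕ Fin 2) F) - 1) := by
    refine ⟨(CharTwo.sub_one_mul_self_eq_zero_iff t.1).2 (congrArg Subtype.val hinv), ?_,
      fun h => by simp [h] at ht⟩
    rw [Matrix.mul_sub, Matrix.mul_one]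
    exact hJt.sub (isAlternating_J _)
  exact congrArg SetLike.coe ((DeltaC_le_rootSubgroup hN).antisymm (rootSubgroup_le_DeltaC hN))

theorem stmt7 (F : Type*) [Field F] [Fintype F] (a : ℕ) (ha : 2 ≤ a)
    (hF : Fintype.card F = 2 ^ a)
    (t : Sp 2 F) (hinv : t * t = 1)
    (ht : ((t : Matrix (Fin 2 ⊕ Fin 2) (Fin 2 ⊕ Fin 2) F) - 1).rank = 2)
    (hshort : ∀ x : (Fin 2 ⊕ Fin 2) → F,
      dotProduct x
        (Matrix.mulVec (Matrix.J (Fin 2) F) (Matrix.mulVec (t : Matrix (Fin 2 ⊕ Fin 2) (Fin 2 ⊕ Fin 2) F) x)) = 0) :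
    (DeltaC t : Set (Sp 2 F))
      = {u : Sp 2 F | ∃ c : F,
          (u : Matrix (Fin 2 ⊕ Fin 2) (Fin 2 ⊕ Fin 2) F)
            = 1 + c • ((t : Matrix (Fin 2 ⊕ Fin 2) (Fin 2 ⊕ Fin 2) F) - 1)} :=
  stmt7_general F a hF t hinv ht hshort
end

section
/- Let q be a prime power, n ≥ 2, and let s, t ∈ Sp_{2n}(q) be commuting transvections (rank(s − 1) = rank(t − 1) = 1) such that the column spaces of s − 1 and t − 1 are distinct. Let H₂ = {1 + a(s − 1) : a ∈ F_q} and H₃ = {1 + b(t − 1) : b ∈ F_q} be the corresponding long root subgroups. Then the set of transvections lying in the set product H₂H₃ = {uw : u ∈ H₂, w ∈ H₃} is exactly (H₂ ∪ H₃) ∖ {1}; in particular, no transvection of Sp_{2n}(q) lying outside H₂ ∪ H₃ belongs to H₂H₃. -/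
open Matrix

theorem linearIndependent_pair_of_span_singleton_ne {K V : Type*} [Field K] [AddCommGroup V]
    [Module K V] {x y : V} (hx : x ≠ 0) (hy : y ≠ 0)
    (h : Submodule.span K {x} ≠ Submodule.span K {y}) : LinearIndependent K ![x, y] := by
  refine (LinearIndependent.pair_iff' hx).mpr fun a hax => h ?_
  have ha : a ≠ 0 := by rintro rfl; exact hy (by rw [← hax, zero_smul])
  rw [← hax, Submodule.span_singleton_smul_eq (IsUnit.mk0 a ha)]

theorem one_add_smul_mul_one_add_smul_s19 {K A : Type*} [CommSemiring K] [Semiring A] [Algebra K A]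
    {S T : A}
    (h : S * T = 0) (a b : K) : (1 + a • S) * (1 + b • T) = 1 + a • S + b • T := by
  rw [mul_add, add_mul, add_mul, smul_mul_smul_comm, h, smul_zero, one_mul, mul_one, one_mul,
    add_zero, add_assoc]

theorem rank_sub_one_of_eq_one_add_smul {ι F : Type*} [Fintype ι] [DecidableEq ι] [Field F]
    {U S : Matrix ι ι F} {a : F} (hU : U = 1 + a • S) (hne : U ≠ 1) : (U - 1).rank = S.rank := by
  have ha : a ≠ 0 := by rintro rfl; exact hne (by rw [hU, zero_smul, add_zero])
  rw [hU, add_sub_cancel_left,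
    rank_smul_of_mem_nonZeroDivisors _ (mem_nonZeroDivisors_of_ne_zero ha)]

section RankOne

variable {m n F : Type*} [Fintype n] [DecidableEq n] [Field F]

theorem range_mulVecLin_vecMulVec (w : m → F) {r : n → F} (hr : r ≠ 0) :
    LinearMap.range (vecMulVec w r).mulVecLin = Submodule.span F {w} := by
  apply le_antisymm
  · rintro _ ⟨x, rfl⟩
    rw [mulVecLin_apply, vecMulVec_mulVec, op_smul_eq_smul]
    exact Submodule.smul_mem _ _ (Submodule.mem_span_singleton_self w)
  · obtain ⟨j, hj⟩ := Function.ne_iff.mp hr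
    rw [Submodule.span_le, Set.singleton_subset_iff]
    refine ⟨Pi.single j (r j)⁻¹, ?_⟩
    rw [mulVecLin_apply, vecMulVec_mulVec, op_smul_eq_smul, dotProduct_single,
      mul_inv_cancel₀ hj, one_smul]

theorem exists_eq_vecMulVec_of_rank_eq_one {M : Matrix m n F} (h : M.rank = 1) :
    ∃ w r, w ≠ 0 ∧ r ≠ 0 ∧ M = vecMulVec w r := by
  obtain ⟨⟨w, hw_mem⟩, hw, hspan⟩ := finrank_eq_one_iff'.mp h
  choose r hr using fun j => hspan ⟨M.col j, Pi.single j 1, by simp⟩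
  have hM : M = vecMulVec w r := by
    ext i j
    simpa [vecMulVec_apply, mul_comm] using (congrFun (congrArg Subtype.val (hr j)) i).symm
  refine ⟨w, r, fun h0 => hw (Subtype.ext h0), ?_, hM⟩
  rintro rfl
  have : vecMulVec w (0 : n → F) = 0 := by ext; simp [vecMulVec_apply]
  rw [hM, this, rank_zero] at h
  exact zero_ne_one h

end RankOne

section RankTwo

variable {κ ι F : Type*} [Fintype κ] [Fintype ι] [Field F]

theorem rank_mul_eq_left_of_range_mulVecLin_eq_top {l m n : Type*} [Fintype m] [Fintype n]
    (A : Matrix l m F) {B : Matrix m n F} (hB : LinearMap.range B.mulVecLin = ⊤) :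
    (A * B).rank = A.rank := by
  rw [rank, rank, mulVecLin_mul, LinearMap.range_comp_of_range_eq_top _ hB]

theorem range_mulVecLin_eq_top_of_linearIndependent {B : Matrix κ ι F}
    (hB : LinearIndependent F B.row) : LinearMap.range B.mulVecLin = ⊤ :=
  Submodule.eq_top_of_finrank_eq <| by
    rw [← rank, hB.rank_matrix, Module.finrank_fintype_fun_eq_card]

theorem rank_transpose_mul_of_linearIndependent {W R : κ → ι → F}
    (hW : LinearIndependent F W) (hR : LinearIndependent F R) :
    ((of W)ᵀ * of R).rank = Fintype.card κ := by
  rw [rank_mul_eq_left_of_range_mulVecLin_eq_top _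
    (range_mulVecLin_eq_top_of_linearIndependent (B := of R) hR), rank_transpose]
  exact hW.rank_matrix

theorem rank_vecMulVec_add_vecMulVec {w w' r r' : ι → F} (hw : LinearIndependent F ![w, w'])
    (hr : LinearIndependent F ![r, r']) : (vecMulVec w r + vecMulVec w' r').rank = 2 := by
  have h : vecMulVec w r + vecMulVec w' r' = (of ![w, w'])ᵀ * of ![r, r'] := by
    ext i j
    simp [mul_apply, Fin.sum_univ_two, vecMulVec_apply]
  rw [h, rank_transpose_mul_of_linearIndependent hw hr, Fintype.card_fin]

theorem dotProduct_eq_zero_of_commute_vecMulVec {w w' r r' : ι → F}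
    (hw : LinearIndependent F ![w, w']) (hr' : r' ≠ 0)
    (h : Commute (vecMulVec w r) (vecMulVec w' r')) : r ⬝ᵥ w' = 0 := by
  obtain ⟨j, hj⟩ := Function.ne_iff.mp hr'
  have hcol : ((r ⬝ᵥ w') * r' j) • w + (-((r' ⬝ᵥ w) * r j)) • w' = 0 := by
    ext i
    have := congrFun (congrFun h.eq i) j
    simp only [vecMulVec_mul_vecMulVec, vecMulVec_apply, Pi.smul_apply, smul_eq_mul] at this
    simp only [Pi.add_apply, Pi.smul_apply, smul_eq_mul, Pi.zero_apply]
    linear_combination this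
  exact (mul_eq_zero.mp (LinearIndependent.pair_iff.mp hw _ _ hcol).1).resolve_right hj

end RankTwo

theorem exists_eq_smul_of_vecMulVec_comm {ι F : Type*} [Field F] {w c : ι → F} (hw : w ≠ 0)
    (h : vecMulVec w c = vecMulVec c w) : ∃ ν : F, c = ν • w := by
  obtain ⟨i, hi : w i ≠ 0⟩ := Function.ne_iff.mp hw
  refine ⟨c i / w i, funext fun j => ?_⟩
  have := congrFun (congrFun h i) j
  simp only [vecMulVec_apply] at this
  rw [Pi.smul_apply, smul_eq_mul]
  field_simp
  linear_combination this

section Symplectic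

variable {l F : Type*} [Fintype l] [DecidableEq l]

-- Checked coordinatewise: skew-symmetry of `J` alone only gives `2 • _ = 0`.
theorem dotProduct_vecMul_J_self {R : Type*} [CommRing R] (r : l ⊕ l → R) :
    (r ᵥ* J l R) ⬝ᵥ r = 0 := by
  simp [vecMul, dotProduct, J, Fintype.sum_sum_type, one_apply, mul_comm]

variable [Field F]

theorem exists_eq_smul_vecMul_J_of_one_add_vecMulVec_mem {w r : l ⊕ l → F} (hw : w ≠ 0)
    (h : 1 + vecMulVec w r ∈ symplecticGroup l F) : ∃ μ : F, r = μ • (w ᵥ* J l F) := by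
  set c := r ᵥ* J l F
  have hc : vecMulVec w c = vecMulVec c w := by
    have hJr : J l F *ᵥ r = -c := by rw [← vecMul_transpose, J_transpose, vecMul_neg]
    -- `(1 + w rᵀ) J (1 + r wᵀ) = J`; the quadratic term vanishes because `c ⬝ᵥ r = 0`.
    have hsymp := SymplecticGroup.mem_iff.mp h
    rw [transpose_add, transpose_one, transpose_vecMulVec] at hsymp
    have key : vecMulVec w r * J l F + J l F * vecMulVec r w
        + vecMulVec w r * J l F * vecMulVec r w = 0 := by
      calc _ = (1 + vecMulVec w r) * J l F * (1 + vecMulVec r w) - J l F := by noncomm_ring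
        _ = 0 := by rw [hsymp, sub_self]
    rwa [vecMulVec_mul, mul_vecMulVec, hJr, vecMulVec_mul_vecMulVec, dotProduct_vecMul_J_self,
      zero_smul, vecMulVec_zero, add_zero, neg_vecMulVec, ← sub_eq_add_neg, sub_eq_zero] at key
  obtain ⟨ν, hν⟩ := exists_eq_smul_of_vecMulVec_comm hw hc
  refine ⟨-ν, ?_⟩
  have : c ᵥ* J l F = -r := by rw [vecMul_vecMul, J_squared, vecMul_neg, vecMul_one]
  rw [← neg_neg r, ← this, hν, smul_vecMul, neg_smul]

theorem linearIndependent_pair_vecMul_J {w w' : l ⊕ l → F} (h : LinearIndependent F ![w, w']) :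
    LinearIndependent F ![w ᵥ* J l F, w' ᵥ* J l F] := by
  have hJ : Function.Injective (vecMulLinear (J l F)) :=
    vecMul_injective_of_isUnit ((isUnit_iff_isUnit_det _).mpr (isUnit_det_J l F))
  have := h.map' _ (LinearMap.ker_eq_bot.mpr hJ)
  rwa [← FinVec.map_eq] at this

theorem linearIndependent_pair_of_one_add_vecMulVec_mem {w w' r r' : l ⊕ l → F}
    (hw : LinearIndependent F ![w, w']) (hr : r ≠ 0) (hr' : r' ≠ 0)
    (hs : 1 + vecMulVec w r ∈ symplecticGroup l F)
    (ht : 1 + vecMulVec w' r' ∈ symplecticGroup l F) : LinearIndependent F ![r, r'] := by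
  obtain ⟨μ, rfl⟩ := exists_eq_smul_vecMul_J_of_one_add_vecMulVec_mem (hw.ne_zero 0) hs
  obtain ⟨μ', rfl⟩ := exists_eq_smul_vecMul_J_of_one_add_vecMulVec_mem (hw.ne_zero 1) ht
  exact (LinearIndependent.pair_smul_smul_iff (IsUnit.mk0 μ (left_ne_zero_of_smul hr))
    (IsUnit.mk0 μ' (left_ne_zero_of_smul hr'))).mpr (linearIndependent_pair_vecMul_J hw)

end Symplectic

section Transvections

variable {l F : Type*} [Fintype l] [DecidableEq l] [Field F] {s t : symplecticGroup l F}

theorem exists_vecMulVec_of_range_ne (hs : ((s : Matrix (l ⊕ l) (l ⊕ l) F) - 1).rank = 1)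
    (ht : ((t : Matrix (l ⊕ l) (l ⊕ l) F) - 1).rank = 1)
    (hrange : LinearMap.range ((s : Matrix (l ⊕ l) (l ⊕ l) F) - 1).mulVecLin
      ≠ LinearMap.range ((t : Matrix (l ⊕ l) (l ⊕ l) F) - 1).mulVecLin) :
    ∃ w r w' r', (s : Matrix (l ⊕ l) (l ⊕ l) F) - 1 = vecMulVec w r ∧
      (t : Matrix (l ⊕ l) (l ⊕ l) F) - 1 = vecMulVec w' r' ∧
      LinearIndependent F ![w, w'] ∧ LinearIndependent F ![r, r'] := by
  obtain ⟨w, r, hw, hr, hS⟩ := exists_eq_vecMulVec_of_rank_eq_one hs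
  obtain ⟨w', r', hw', hr', hT⟩ := exists_eq_vecMulVec_of_rank_eq_one ht
  rw [hS, hT, range_mulVecLin_vecMulVec w hr, range_mulVecLin_vecMulVec w' hr'] at hrange
  have hww' := linearIndependent_pair_of_span_singleton_ne hw hw' hrange
  refine ⟨w, r, w', r', hS, hT, hww', ?_⟩
  exact linearIndependent_pair_of_one_add_vecMulVec_mem hww' hr hr'
    (by rw [← hS, add_sub_cancel]; exact s.2) (by rw [← hT, add_sub_cancel]; exact t.2)

theorem sub_one_mul_sub_one_eq_zero_of_commute
    (hs : ((s : Matrix (l ⊕ l) (l ⊕ l) F) - 1).rank = 1)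
    (ht : ((t : Matrix (l ⊕ l) (l ⊕ l) F) - 1).rank = 1)
    (hrange : LinearMap.range ((s : Matrix (l ⊕ l) (l ⊕ l) F) - 1).mulVecLin
      ≠ LinearMap.range ((t : Matrix (l ⊕ l) (l ⊕ l) F) - 1).mulVecLin) (hcomm : Commute s t) :
    ((s : Matrix (l ⊕ l) (l ⊕ l) F) - 1) * (t - 1) = 0 := by
  obtain ⟨w, r, w', r', hS, hT, hww', hrr'⟩ := exists_vecMulVec_of_range_ne hs ht hrange
  have hc : Commute (vecMulVec w r) (vecMulVec w' r') := by
    rw [← hS, ← hT]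
    exact ((hcomm.map (symplecticGroup l F).subtype).sub_right
      (Commute.one_right _)).sub_left (Commute.one_left _)
  rw [hS, hT, vecMulVec_mul_vecMulVec,
    dotProduct_eq_zero_of_commute_vecMulVec hww' (hrr'.ne_zero 1) hc, zero_smul, vecMulVec_zero]

theorem rank_smul_sub_one_add_smul_sub_one
    (hs : ((s : Matrix (l ⊕ l) (l ⊕ l) F) - 1).rank = 1)
    (ht : ((t : Matrix (l ⊕ l) (l ⊕ l) F) - 1).rank = 1)
    (hrange : LinearMap.range ((s : Matrix (l ⊕ l) (l ⊕ l) F) - 1).mulVecLin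
      ≠ LinearMap.range ((t : Matrix (l ⊕ l) (l ⊕ l) F) - 1).mulVecLin)
    {a b : F} (ha : a ≠ 0) (hb : b ≠ 0) :
    (a • ((s : Matrix (l ⊕ l) (l ⊕ l) F) - 1) + b • (t - 1)).rank = 2 := by
  obtain ⟨w, r, w', r', hS, hT, hww', hrr'⟩ := exists_vecMulVec_of_range_ne hs ht hrange
  rw [hS, hT, ← smul_vecMulVec, ← smul_vecMulVec]
  exact rank_vecMulVec_add_vecMulVec
    ((LinearIndependent.pair_smul_smul_iff (IsUnit.mk0 _ ha) (IsUnit.mk0 _ hb)).mpr hww') hrr'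

end Transvections

open Pointwise in
theorem stmt19_general (n : ℕ) (F : Type*) [Field F]
    (s t : Sp n F) (hcomm : Commute s t)
    (hs : ((s : Matrix (Fin n ⊕ Fin n) (Fin n ⊕ Fin n) F) - 1).rank = 1)
    (ht : ((t : Matrix (Fin n ⊕ Fin n) (Fin n ⊕ Fin n) F) - 1).rank = 1)
    (hrange : LinearMap.range (((s : Matrix (Fin n ⊕ Fin n) (Fin n ⊕ Fin n) F) - 1).mulVecLin)
      ≠ LinearMap.range (((t : Matrix (Fin n ⊕ Fin n) (Fin n ⊕ Fin n) F) - 1).mulVecLin))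
    (H₂ H₃ : Set (Sp n F))
    (hH₂ : H₂ = {u : Sp n F | ∃ a : F,
      (u : Matrix (Fin n ⊕ Fin n) (Fin n ⊕ Fin n) F)
        = 1 + a • ((s : Matrix (Fin n ⊕ Fin n) (Fin n ⊕ Fin n) F) - 1)})
    (hH₃ : H₃ = {u : Sp n F | ∃ b : F,
      (u : Matrix (Fin n ⊕ Fin n) (Fin n ⊕ Fin n) F)
        = 1 + b • ((t : Matrix (Fin n ⊕ Fin n) (Fin n ⊕ Fin n) F) - 1)}) :
    {u : Sp n F | u ∈ H₂ * H₃
        ∧ ((u : Matrix (Fin n ⊕ Fin n) (Fin n ⊕ Fin n) F) - 1).rank = 1}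
      = (H₂ ∪ H₃) \ {1} := by
  subst hH₂ hH₃
  have hST := sub_one_mul_sub_one_eq_zero_of_commute hs ht hrange hcomm
  ext u
  constructor
  · rintro ⟨⟨g, ⟨a, hg⟩, h, ⟨b, hh⟩, rfl⟩, hu⟩
    have hgh : ((g * h : Sp n F) : Matrix (Fin n ⊕ Fin n) (Fin n ⊕ Fin n) F)
        = 1 + a • ((s : Matrix (Fin n ⊕ Fin n) (Fin n ⊕ Fin n) F) - 1) + b • (t - 1) := by
      rw [Submonoid.coe_mul, hg, hh, one_add_smul_mul_one_add_smul_s19 hST]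
    have hab : a = 0 ∨ b = 0 := by
      by_contra! hab
      rw [hgh, add_assoc, add_sub_cancel_left,
        rank_smul_sub_one_add_smul_sub_one hs ht hrange hab.1 hab.2] at hu
      exact absurd hu (by norm_num)
    refine ⟨?_, fun h1 => ?_⟩
    · rcases hab with rfl | rfl
      · exact Or.inr ⟨b, by rw [hgh, zero_smul, add_zero]⟩
      · exact Or.inl ⟨a, by rw [hgh, zero_smul, add_zero]⟩
    · rw [h1, OneMemClass.coe_one, sub_self, rank_zero] at hu
      exact zero_ne_one hu
  · rintro ⟨⟨a, hu⟩ | ⟨b, hu⟩, hne⟩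
    · exact ⟨⟨u, ⟨a, hu⟩, 1, ⟨0, by simp⟩, mul_one u⟩,
        (rank_sub_one_of_eq_one_add_smul hu fun h1 => hne (Subtype.ext h1)).trans hs⟩
    · exact ⟨⟨1, ⟨0, by simp⟩, u, ⟨b, hu⟩, one_mul u⟩,
        (rank_sub_one_of_eq_one_add_smul hu fun h1 => hne (Subtype.ext h1)).trans ht⟩

open Pointwise in
theorem stmt19 (n : ℕ) (hn : 2 ≤ n) (F : Type*) [Field F] [Fintype F]
    (s t : Sp n F) (hcomm : Commute s t)
    (hs : ((s : Matrix (Fin n ⊕ Fin n) (Fin n ⊕ Fin n) F) - 1).rank = 1)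
    (ht : ((t : Matrix (Fin n ⊕ Fin n) (Fin n ⊕ Fin n) F) - 1).rank = 1)
    (hrange : LinearMap.range (((s : Matrix (Fin n ⊕ Fin n) (Fin n ⊕ Fin n) F) - 1).mulVecLin)
      ≠ LinearMap.range (((t : Matrix (Fin n ⊕ Fin n) (Fin n ⊕ Fin n) F) - 1).mulVecLin))
    (H₂ H₃ : Set (Sp n F))
    (hH₂ : H₂ = {u : Sp n F | ∃ a : F,
      (u : Matrix (Fin n ⊕ Fin n) (Fin n ⊕ Fin n) F)
        = 1 + a • ((s : Matrix (Fin n ⊕ Fin n) (Fin n ⊕ Fin n) F) - 1)})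
    (hH₃ : H₃ = {u : Sp n F | ∃ b : F,
      (u : Matrix (Fin n ⊕ Fin n) (Fin n ⊕ Fin n) F)
        = 1 + b • ((t : Matrix (Fin n ⊕ Fin n) (Fin n ⊕ Fin n) F) - 1)}) :
    {u : Sp n F | u ∈ H₂ * H₃
        ∧ ((u : Matrix (Fin n ⊕ Fin n) (Fin n ⊕ Fin n) F) - 1).rank = 1}
      = (H₂ ∪ H₃) \ {1} :=
  stmt19_general n F s t hcomm hs ht hrange H₂ H₃ hH₂ hH₃
end
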